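/- For the multicomponent plasma model with state V = (ρ_h, ρ_h u, E, ρ_e, ρ_e ε_e), ideal-gas laws p_h = κρ_hε_h, p_e = κρ_eε_e (κ = γ−1), total energy E = ρ_h u²/2 + ρ_hε_h + ρ_eε_e, and mathematical entropy H = −ρ_h s_h − ρ_e s_e with s_h = c_v ln(p_h/(κρ_h^γ)), s_e = c_v ln(p_e/(κρ_e^γ)), the entropic variables w = (∂_V H)^t are w = ((g_h − u²/2)/T_h, u/T_h, −1/T_h, g_e/T_e, 1/T_h − 1/T_e), where g_k = ε_k + p_k/ρ_k − T_k s_k and T_k = ε_k/c_v. -/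

import Mathlib

/-!
`H` is a sum of two ideal-gas entropy densities `η(ρ, m) = -ρ c_v (log m - γ log ρ)`, taken at
`(ρ_h, ρ_h ε_h)` and `(ρ_e, ρ_e ε_e)`. Their partial derivatives are `∂_ρ η = c_v γ - s = g / T`
and `∂_m η = -1 / T`, so the chain rule gives the entropic variables. The kinetic energy enters
only through `ρ_h ε_h = E - (ρ_h u)² / (2 ρ_h) - ρ_e ε_e`, whose differential is
`(u² / 2) dρ_h - u d(ρ_h u) + dE - d(ρ_e ε_e)`; this is why `g_e / T_e` has no `u² / 2` term and
the last entry is `1 / T_h - 1 / T_e`.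
-/

noncomputable section

def pd {p : ℕ} (f : (Fin p → ℝ) → ℝ) (V : Fin p → ℝ) (i : Fin p) : ℝ :=
  fderiv ℝ f V (Pi.single i 1)

def grad {p : ℕ} (H : (Fin p → ℝ) → ℝ) (V : Fin p → ℝ) : Fin p → ℝ :=
  fun i => pd H V i

namespace Plasma
/- State vector `V = (ρ_h, ρ_h u, E, ρ_e, ρ_e ε_e)`. -/
def rhoh (V : Fin 5 → ℝ) : ℝ := V 0
def u (V : Fin 5 → ℝ) : ℝ := V 1 / V 0
def rhoe (V : Fin 5 → ℝ) : ℝ := V 3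
def epse (V : Fin 5 → ℝ) : ℝ := V 4 / V 3
/-- `ε_h = (E − ρ_h u²/2 − ρ_e ε_e)/ρ_h`. -/
def epsh (V : Fin 5 → ℝ) : ℝ := (V 2 - (V 1) ^ 2 / (2 * V 0) - V 4) / V 0
def ph (γ : ℝ) (V : Fin 5 → ℝ) : ℝ := (γ - 1) * rhoh V * epsh V
def pe (γ : ℝ) (V : Fin 5 → ℝ) : ℝ := (γ - 1) * rhoe V * epse V
def Th (cv : ℝ) (V : Fin 5 → ℝ) : ℝ := epsh V / cv
def Te (cv : ℝ) (V : Fin 5 → ℝ) : ℝ := epse V / cv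
def sh (cv γ : ℝ) (V : Fin 5 → ℝ) : ℝ :=
  cv * Real.log (ph γ V / ((γ - 1) * (rhoh V) ^ γ))
def se (cv γ : ℝ) (V : Fin 5 → ℝ) : ℝ :=
  cv * Real.log (pe γ V / ((γ - 1) * (rhoe V) ^ γ))
def gh (cv γ : ℝ) (V : Fin 5 → ℝ) : ℝ :=
  epsh V + ph γ V / rhoh V - Th cv V * sh cv γ V
def ge (cv γ : ℝ) (V : Fin 5 → ℝ) : ℝ :=
  epse V + pe γ V / rhoe V - Te cv V * se cv γ V
/-- Plasma mathematical entropy `H = −ρ_h s_h − ρ_e s_e`. -/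
def Hpl (cv γ : ℝ) (V : Fin 5 → ℝ) : ℝ := -(V 0 * sh cv γ V + V 3 * se cv γ V)
end Plasma

open Real Topology

/-- `-ρ s` for an ideal gas in the variables `ρ` and `m = ρ ε`, with `s = c_v log (ε / ρ^(γ-1))`. -/
def entropyDensity (cv γ ρ m : ℝ) : ℝ := -(ρ * (cv * (log m - γ * log ρ)))

theorem HasFDerivAt.entropyDensity {E : Type*} [NormedAddCommGroup E] [NormedSpace ℝ E]
    {ρ m : E → ℝ} {ρ' m' : E →L[ℝ] ℝ} {x : E} (cv γ : ℝ)
    (hρ : HasFDerivAt ρ ρ' x) (hm : HasFDerivAt m m' x) (hρx : ρ x ≠ 0) (hmx : m x ≠ 0) :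
    HasFDerivAt (fun y => entropyDensity cv γ (ρ y) (m y))
      ((cv * γ - cv * (Real.log (m x) - γ * Real.log (ρ x))) • ρ' - (cv * ρ x / m x) • m') x := by
  have h := (hρ.mul (((hm.log hmx).sub ((hρ.log hρx).const_mul γ)).const_mul cv)).neg
  refine h.congr_fderiv ?_
  ext v
  simp only [sub_apply, smul_apply, neg_apply, add_apply, smul_eq_mul, Pi.sub_apply]
  field_simp
  ring

theorem log_mul_mul_div_mul_rpow {κ ρ ε γ : ℝ} (hκ : κ ≠ 0) (hρ : 0 < ρ) (hε : 0 < ε) :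
    log (κ * ρ * ε / (κ * ρ ^ γ)) = log (ρ * ε) - γ * log ρ := by
  rw [mul_assoc, mul_div_mul_left _ _ hκ, log_div (by positivity) (rpow_pos_of_pos hρ γ).ne',
    log_rpow hρ]

namespace Plasma

def rhoEpsh (V : Fin 5 → ℝ) : ℝ := V 2 - V 1 ^ 2 / (2 * V 0) - V 4

theorem rhoEpsh_eq {V : Fin 5 → ℝ} (h : V 0 ≠ 0) : rhoEpsh V = V 0 * epsh V := by
  unfold rhoEpsh epsh
  field_simp

theorem sh_eq {cv γ : ℝ} (hγ : γ ≠ 1) {V : Fin 5 → ℝ} (hρ : 0 < V 0) (hε : 0 < epsh V) :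
    sh cv γ V = cv * (log (rhoEpsh V) - γ * log (V 0)) := by
  rw [sh, ph, rhoh, log_mul_mul_div_mul_rpow (sub_ne_zero.2 hγ) hρ hε, rhoEpsh_eq hρ.ne']

theorem se_eq {cv γ : ℝ} (hγ : γ ≠ 1) {V : Fin 5 → ℝ} (hρ : 0 < V 3) (hε : 0 < epse V) :
    se cv γ V = cv * (log (V 4) - γ * log (V 3)) := by
  rw [se, pe, rhoe, log_mul_mul_div_mul_rpow (sub_ne_zero.2 hγ) hρ hε, epse,
    mul_div_cancel₀ _ hρ.ne']

theorem Hpl_eq {cv γ : ℝ} (hγ : γ ≠ 1) {V : Fin 5 → ℝ} (hρh : 0 < V 0) (hρe : 0 < V 3)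
    (heh : 0 < epsh V) (hee : 0 < epse V) :
    Hpl cv γ V = entropyDensity cv γ (V 0) (rhoEpsh V) + entropyDensity cv γ (V 3) (V 4) := by
  rw [Hpl, sh_eq hγ hρh heh, se_eq hγ hρe hee, entropyDensity, entropyDensity]
  ring

local notation:max "dV " i:max => ContinuousLinearMap.proj (R := ℝ) (φ := fun _ : Fin 5 => ℝ) i

theorem hasFDerivAt_rhoEpsh {V : Fin 5 → ℝ} (h : V 0 ≠ 0) :
    HasFDerivAt rhoEpsh ((u V ^ 2 / 2) • dV 0 - u V • dV 1 + dV 2 - dV 4) V := by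
  have hd := fun i : Fin 5 => hasFDerivAt_apply (𝕜 := ℝ) i V
  have h2 : (2 * V 0) ≠ 0 := mul_ne_zero two_ne_zero h
  have h := ((hd 2).sub (((hd 1).pow 2).mul
    ((hasDerivAt_inv h2).comp_hasFDerivAt V ((hd 0).const_mul 2)))).sub (hd 4)
  refine (h.congr_of_eventuallyEq (.of_forall fun W => ?_)).congr_fderiv ?_
  · simp [rhoEpsh, div_eq_mul_inv]
  ext v
  simp only [sub_apply, add_apply, smul_apply, ContinuousLinearMap.proj_apply, smul_eq_mul, u,
    Function.comp_apply, Nat.add_one_sub_one, pow_one, nsmul_eq_mul, Nat.cast_ofNat]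
  field_simp
  ring

theorem Hpl_eventuallyEq {cv γ : ℝ} (hγ : γ ≠ 1) {V : Fin 5 → ℝ} (hρh : 0 < V 0)
    (hρe : 0 < V 3) (hmh : 0 < rhoEpsh V) (hme : 0 < V 4) :
    Hpl cv γ =ᶠ[𝓝 V]
      fun W => entropyDensity cv γ (W 0) (rhoEpsh W) + entropyDensity cv γ (W 3) (W 4) := by
  have hpos : ∀ {f : (Fin 5 → ℝ) → ℝ}, ContinuousAt f V → 0 < f V → ∀ᶠ W in 𝓝 V, 0 < f W :=
    fun hf h => hf.eventually (Ioi_mem_nhds h)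
  filter_upwards [hpos (continuous_apply 0).continuousAt hρh,
    hpos (continuous_apply 3).continuousAt hρe,
    hpos (hasFDerivAt_rhoEpsh hρh.ne').continuousAt hmh,
    hpos (continuous_apply 4).continuousAt hme] with W hρh hρe hmh hme
  exact Hpl_eq hγ hρh hρe (div_pos hmh hρh) (div_pos hme hρe)

theorem hasFDerivAt_Hpl (cv : ℝ) {γ : ℝ} (hγ : γ ≠ 1) {V : Fin 5 → ℝ} (hρh : 0 < V 0)
    (hρe : 0 < V 3) (heh : 0 < epsh V) (hee : 0 < epse V) :
    HasFDerivAt (Hpl cv γ)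
      ((cv * γ - sh cv γ V) • dV 0
        - (1 / Th cv V) • ((u V ^ 2 / 2) • dV 0 - u V • dV 1 + dV 2 - dV 4)
        + (cv * γ - se cv γ V) • dV 3 - (1 / Te cv V) • dV 4) V := by
  have hmh : rhoEpsh V = V 0 * epsh V := rhoEpsh_eq hρh.ne'
  have hme : V 4 = V 3 * epse V := by rw [epse, mul_div_cancel₀ _ hρe.ne']
  have hH := ((hasFDerivAt_apply 0 V).entropyDensity cv γ (hasFDerivAt_rhoEpsh hρh.ne') hρh.ne'
    (hmh ▸ (mul_pos hρh heh).ne')).add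
    ((hasFDerivAt_apply 3 V).entropyDensity cv γ (hasFDerivAt_apply 4 V) hρe.ne'
      (hme ▸ (mul_pos hρe hee).ne'))
  refine (hH.congr_of_eventuallyEq ?_).congr_fderiv ?_
  · exact Hpl_eventuallyEq hγ hρh hρe (hmh ▸ mul_pos hρh heh) (hme ▸ mul_pos hρe hee)
  · rw [sh_eq hγ hρh heh, se_eq hγ hρe hee, Th, Te, hmh, hme]
    ext v
    simp only [add_apply, sub_apply, smul_apply, ContinuousLinearMap.proj_apply, smul_eq_mul]
    field_simp
    ring

theorem gh_div_Th {cv : ℝ} (γ : ℝ) (hcv : cv ≠ 0) {V : Fin 5 → ℝ} (hρ : V 0 ≠ 0)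
    (hε : epsh V ≠ 0) :
    gh cv γ V / Th cv V = cv * γ - sh cv γ V := by
  rw [gh, Th, ph, rhoh]
  field_simp
  ring

theorem ge_div_Te {cv : ℝ} (γ : ℝ) (hcv : cv ≠ 0) {V : Fin 5 → ℝ} (hρ : V 3 ≠ 0)
    (hε : epse V ≠ 0) :
    ge cv γ V / Te cv V = cv * γ - se cv γ V := by
  rw [ge, Te, pe, rhoe]
  field_simp
  ring

end Plasma

open Plasma in
theorem stmt12 (cv γ : ℝ) (hcv : 0 < cv) (hγ : 1 < γ)
    (V : Fin 5 → ℝ) (hρh : 0 < V 0) (hρe : 0 < V 3)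
    (heh : 0 < epsh V) (hee : 0 < epse V) :
    grad (Hpl cv γ) V 0 = (gh cv γ V - (u V) ^ 2 / 2) / Th cv V ∧
    grad (Hpl cv γ) V 1 = u V / Th cv V ∧
    grad (Hpl cv γ) V 2 = -(1 / Th cv V) ∧
    grad (Hpl cv γ) V 3 = ge cv γ V / Te cv V ∧
    grad (Hpl cv γ) V 4 = 1 / Th cv V - 1 / Te cv V := by
  have hH := hasFDerivAt_Hpl cv hγ.ne' hρh hρe heh hee
  have hgh := gh_div_Th γ hcv.ne' hρh.ne' heh.ne'
  have hge := ge_div_Te γ hcv.ne' hρe.ne' hee.ne'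
  simp only [grad, pd, hH.fderiv]
  simp only [one_div, sub_apply, add_apply, smul_apply, ContinuousLinearMap.proj_apply,
    Pi.single_eq_same, Pi.single_eq_of_ne, ne_eq, Fin.reduceEq, not_false_eq_true, smul_eq_mul,
    mul_one, mul_zero, sub_zero, add_zero, zero_sub, zero_add, sub_self, mul_neg, sub_neg_eq_add,
    and_true, true_and]
  exact ⟨by rw [sub_div, hgh]; ring, by rw [div_eq_inv_mul], hge.symm⟩

end
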